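/- Let A be a skew left brace with associated solution r_A(a,b) = (λ_a(b), λ⁻¹_{λ_a(b)}((a∘b)⁻¹·a·(a∘b))), and let s : A × A → A × A be the Venkov map s(a,b) = (b, b⁻¹·a·b). For n ∈ ℕ define T_n : Aⁿ → Aⁿ by T_n(a_1,…,a_n) = (a_1, λ_{a_1}(a_2), λ_{a_1∘a_2}(a_3), …, λ_{a_1∘⋯∘a_{n-1}}(a_n)). Then T_n is invertible, with inverse T_n⁻¹(a_1,…,a_n) = (a_1, λ⁻¹_{a_1}(a_2), λ⁻¹_{a_1·a_2}(a_3), …, λ⁻¹_{a_1⋯a_{n-1}}(a_n)), and for all n ≥ 2 and all i ∈ {1,…,n−1} one has T_n ∘ r_{i,i+1} = s_{i,i+1} ∘ T_n, where r_{i,i+1} (resp. s_{i,i+1}) denotes the map Aⁿ → Aⁿ applying r_A (resp. s) to the i-th and (i+1)-st coordinates and the identity elsewhere. -/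

import Mathlib

/-- A skew left brace structure on a group `(A, ·)`: a second group structure
`(a, b) ↦ circ a b` (with identity `circOne` and inverse `circInv`) satisfying
`a ∘ (b · c) = (a ∘ b) · a⁻¹ · (a ∘ c)`. -/
structure SkewLeftBrace (A : Type*) [Group A] where
  circ : A → A → A
  circ_assoc : ∀ a b c : A, circ (circ a b) c = circ a (circ b c)
  circOne : A
  circOne_circ : ∀ a : A, circ circOne a = a
  circ_circOne : ∀ a : A, circ a circOne = a
  circInv : A → A
  circInv_circ : ∀ a : A, circ (circInv a) a = circOne
  circ_circInv : ∀ a : A, circ a (circInv a) = circOne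
  circ_mul : ∀ a b c : A, circ a (b * c) = circ a b * a⁻¹ * circ a c

namespace SkewLeftBrace

variable {A : Type*} [Group A]

/-- The map `λ_a : b ↦ a⁻¹ · (a ∘ b)`. -/
def lam (S : SkewLeftBrace A) (a b : A) : A := a⁻¹ * S.circ a b

/-- The inverse `λ⁻¹_a` of the bijective map `λ_a`. -/
noncomputable def lamInv (S : SkewLeftBrace A) (a : A) : A → A :=
  Function.invFun (S.lam a)

/-- The canonical solution `r_A (a, b) = (λ_a b, λ⁻¹_{λ_a b} ((a ∘ b)⁻¹ · a · (a ∘ b)))`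
associated with a skew left brace. -/
noncomputable def rmap (S : SkewLeftBrace A) : A × A → A × A :=
  fun p => (S.lam p.1 p.2,
    S.lamInv (S.lam p.1 p.2) ((S.circ p.1 p.2)⁻¹ * p.1 * S.circ p.1 p.2))

end SkewLeftBrace

/-- The guitar map `T_n (a₁, …, aₙ) = (a₁, λ_{a₁} a₂, λ_{a₁ ∘ a₂} a₃, …,
λ_{a₁ ∘ ⋯ ∘ a_{n-1}} aₙ)`. -/
def guitarMap {A : Type*} [Group A] (S : SkewLeftBrace A) (n : ℕ) (a : Fin n → A) :
    Fin n → A :=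
  fun i => S.lam (((List.ofFn a).take (i : ℕ)).foldl S.circ S.circOne) (a i)

/-- The claimed inverse of the guitar map:
`(a₁, λ⁻¹_{a₁} a₂, λ⁻¹_{a₁ a₂} a₃, …, λ⁻¹_{a₁ ⋯ a_{n-1}} aₙ)`. -/
noncomputable def guitarMapInv {A : Type*} [Group A] (S : SkewLeftBrace A) (n : ℕ)
    (a : Fin n → A) : Fin n → A :=
  fun i => S.lamInv (((List.ofFn a).take (i : ℕ)).foldl (· * ·) 1) (a i)

/-- Apply a map `g : A × A → A × A` to the `i`-th and `j`-th coordinates of a tuple,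
leaving the other coordinates fixed. -/
def applyPair {A : Type*} {n : ℕ} (i j : Fin n) (g : A × A → A × A) (a : Fin n → A) :
    Fin n → A :=
  Function.update (Function.update a i (g (a i, a j)).1) j (g (a i, a j)).2

/-- The Venkov solution `s (a, b) = (b, b⁻¹ · a · b)`. -/
def venkov {A : Type*} [Group A] : A × A → A × A := fun p => (p.2, p.2⁻¹ * p.1 * p.2)

/-!
Write `C_k(a) = a₁ ∘ ⋯ ∘ a_k` and `P_k(b) = b₁ ⋯ b_k`. Since `x ∘ y = x · λ_x(y)` and
`λ_{x ∘ y} = λ_x ∘ λ_y`, the guitar map turns ∘-prefix products into ·-prefix products: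
`P_k(T a) = C_k(a)`, which gives both inverse formulas at once. A tuple is determined by its
·-prefix products, and `r` preserves `a ∘ b` while `s` preserves `a · b`, so `T (r_{i,i+1} a)`
and `s_{i,i+1} (T a)` have the same prefix products `C_k(a)` for every `k ≠ i + 1`; at
`k = i + 1` both equal `C_i(a) ∘ λ_{a_i}(a_{i+1})`.
-/

namespace SkewLeftBrace

variable {A : Type*} [Group A] (S : SkewLeftBrace A)

lemma circ_one (a : A) : S.circ a 1 = a := by
  have h := S.circ_mul a 1 1
  rw [one_mul, mul_assoc, left_eq_mul, inv_mul_eq_one] at h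
  exact h.symm

lemma circOne_eq_one : S.circOne = 1 := by
  simpa only [S.circ_one] using S.circOne_circ 1

lemma circ_eq_mul_lam (a b : A) : S.circ a b = a * S.lam a b := by
  rw [lam, mul_inv_cancel_left]

lemma lam_circ (a b c : A) : S.lam (S.circ a b) c = S.lam a (S.lam b c) := by
  calc S.lam (S.circ a b) c
      = (S.circ a b)⁻¹ * S.circ a (b * S.lam b c) := by rw [lam, S.circ_assoc, S.circ_eq_mul_lam b]
    _ = S.lam a (S.lam b c) := by rw [S.circ_mul]; unfold lam; group

lemma lam_circOne (b : A) : S.lam S.circOne b = b := by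
  rw [lam, S.circOne_circ, circOne_eq_one, inv_one, one_mul]

lemma lam_circInv_lam (a b : A) : S.lam (S.circInv a) (S.lam a b) = b := by
  rw [← lam_circ, S.circInv_circ, lam_circOne]

lemma lam_lam_circInv (a b : A) : S.lam a (S.lam (S.circInv a) b) = b := by
  rw [← lam_circ, S.circ_circInv, lam_circOne]

lemma lamInv_lam (a b : A) : S.lamInv a (S.lam a b) = b :=
  Function.leftInverse_invFun (Function.LeftInverse.injective (S.lam_circInv_lam a)) b

lemma lam_lamInv (a b : A) : S.lam a (S.lamInv a b) = b :=
  Function.rightInverse_invFun (Function.LeftInverse.surjective (S.lam_lam_circInv a)) b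

lemma circ_rmap (p : A × A) : S.circ (S.rmap p).1 (S.rmap p).2 = S.circ p.1 p.2 := by
  rw [rmap, circ_eq_mul_lam, lam_lamInv, lam]
  group

lemma circ_circ_rmap (x : A) (p : A × A) :
    S.circ (S.circ x (S.rmap p).1) (S.rmap p).2 = S.circ (S.circ x p.1) p.2 := by
  rw [S.circ_assoc, circ_rmap, S.circ_assoc]

end SkewLeftBrace

lemma applyPair_apply_left {A : Type*} {n : ℕ} {i j : Fin n} (hij : i ≠ j)
    (g : A × A → A × A) (a : Fin n → A) : applyPair i j g a i = (g (a i, a j)).1 := by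
  rw [applyPair, Function.update_of_ne hij, Function.update_self]

lemma applyPair_apply_right {A : Type*} {n : ℕ} (i j : Fin n) (g : A × A → A × A)
    (a : Fin n → A) : applyPair i j g a j = (g (a i, a j)).2 :=
  Function.update_self _ _ _

lemma applyPair_apply_of_ne {A : Type*} {n : ℕ} {i j k : Fin n} (hki : k ≠ i) (hkj : k ≠ j)
    (g : A × A → A × A) (a : Fin n → A) : applyPair i j g a k = a k := by
  rw [applyPair, Function.update_of_ne hkj, Function.update_of_ne hki]

def prefixFold {A : Type*} (f : A → A → A) (e : A) {n : ℕ} (a : Fin n → A) (i : ℕ) : A :=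
  ((List.ofFn a).take i).foldl f e

lemma mul_venkov {G : Type*} [Group G] (x : G) (p : G × G) :
    x * (venkov p).1 * (venkov p).2 = x * p.1 * p.2 := by
  simp only [venkov]
  group

section PrefixFold

variable {A : Type*} (f : A → A → A) (e : A) {n : ℕ}

lemma prefixFold_succ (a : Fin n → A) {i : ℕ} (h : i < n) :
    prefixFold f e a (i + 1) = f (prefixFold f e a i) (a ⟨i, h⟩) := by
  rw [prefixFold, List.take_add_one, List.foldl_append]
  simp [h, prefixFold]

lemma prefixFold_congr_of_le {a a' : Fin n → A} {m k : ℕ} (hmk : m ≤ k) (hk : k ≤ n)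
    (hm : prefixFold f e a m = prefixFold f e a' m)
    (h : ∀ j : Fin n, m ≤ j → (j : ℕ) < k → a j = a' j) :
    prefixFold f e a k = prefixFold f e a' k := by
  induction k, hmk using Nat.le_induction with
  | base => exact hm
  | succ k hmk ih =>
    rw [prefixFold_succ f e a hk, prefixFold_succ f e a' hk,
      ih (by omega) (fun j hj hjk => h j hj (by omega)), h ⟨k, hk⟩ hmk (by simp)]

variable {f}

lemma prefixFold_applyPair {g : A × A → A × A}
    (hg : ∀ x p, f (f x (g p).1) (g p).2 = f (f x p.1) p.2)
    (a : Fin n → A) {i : ℕ} (hi : i + 1 < n) {k : ℕ} (hk : k ≤ n) (hki : k ≠ i + 1) :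
    prefixFold f e (applyPair ⟨i, Nat.lt_of_succ_lt hi⟩ ⟨i + 1, hi⟩ g a) k =
      prefixFold f e a k := by
  set a' := applyPair ⟨i, Nat.lt_of_succ_lt hi⟩ ⟨i + 1, hi⟩ g a with ha'
  have hne : (⟨i, Nat.lt_of_succ_lt hi⟩ : Fin n) ≠ ⟨i + 1, hi⟩ := by simp
  have off : ∀ j : Fin n, (j : ℕ) ≠ i → (j : ℕ) ≠ i + 1 → a' j = a j := fun j hji hji1 =>
    applyPair_apply_of_ne (Fin.ne_of_val_ne hji) (Fin.ne_of_val_ne hji1) g a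
  have below : ∀ k ≤ i, prefixFold f e a' k = prefixFold f e a k := fun k hk =>
    prefixFold_congr_of_le f e (Nat.zero_le k) (by omega) rfl
      (fun j _ hj => off j (by omega) (by omega))
  rcases le_or_gt k i with hki' | hki'
  · exact below k hki'
  · have above : prefixFold f e a' (i + 2) = prefixFold f e a (i + 2) := by
      rw [prefixFold_succ f e _ hi, prefixFold_succ f e _ (Nat.lt_of_succ_lt hi),
        below i le_rfl, ha', applyPair_apply_left hne, applyPair_apply_right, hg,
        prefixFold_succ f e a hi, prefixFold_succ f e a (Nat.lt_of_succ_lt hi)]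
    exact prefixFold_congr_of_le f e (by omega) hk above
      (fun j hj _ => off j (by omega) (by omega))

end PrefixFold

lemma eq_of_prefixFold_mul_eq {G : Type*} [Group G] {n : ℕ} {b b' : Fin n → G}
    (h : ∀ k ≤ n, prefixFold (· * ·) 1 b k = prefixFold (· * ·) 1 b' k) : b = b' := by
  funext j
  have hj := h (j + 1) j.isLt
  rw [prefixFold_succ _ _ _ j.isLt, prefixFold_succ _ _ _ j.isLt, h j j.isLt.le] at hj
  exact mul_left_cancel hj

section Guitar

variable {A : Type*} [Group A] (S : SkewLeftBrace A) {n : ℕ}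

lemma guitarMap_apply (a : Fin n → A) (i : Fin n) :
    guitarMap S n a i = S.lam (prefixFold S.circ S.circOne a i) (a i) := rfl

lemma guitarMapInv_apply (a : Fin n → A) (i : Fin n) :
    guitarMapInv S n a i = S.lamInv (prefixFold (· * ·) 1 a i) (a i) := rfl

lemma prefixFold_guitarMap (a : Fin n → A) {k : ℕ} (hk : k ≤ n) :
    prefixFold (· * ·) 1 (guitarMap S n a) k = prefixFold S.circ S.circOne a k := by
  induction k with
  | zero => exact S.circOne_eq_one.symm
  | succ k ih =>
    rw [prefixFold_succ _ _ _ hk, prefixFold_succ _ _ _ hk, ih (by omega), guitarMap_apply,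
      S.circ_eq_mul_lam]

lemma prefixFold_guitarMapInv (b : Fin n → A) {k : ℕ} (hk : k ≤ n) :
    prefixFold S.circ S.circOne (guitarMapInv S n b) k = prefixFold (· * ·) 1 b k := by
  induction k with
  | zero => exact S.circOne_eq_one
  | succ k ih =>
    rw [prefixFold_succ _ _ _ hk, prefixFold_succ _ _ _ hk, ih (by omega), guitarMapInv_apply,
      S.circ_eq_mul_lam, S.lam_lamInv]

lemma guitarMapInv_guitarMap (a : Fin n → A) : guitarMapInv S n (guitarMap S n a) = a := by
  funext i
  rw [guitarMapInv_apply, prefixFold_guitarMap S a i.isLt.le, guitarMap_apply, S.lamInv_lam]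

lemma guitarMap_guitarMapInv (b : Fin n → A) : guitarMap S n (guitarMapInv S n b) = b := by
  funext i
  rw [guitarMap_apply, prefixFold_guitarMapInv S b i.isLt.le, guitarMapInv_apply, S.lam_lamInv]

lemma guitarMap_applyPair_rmap {i : ℕ} (h : i + 1 < n) (a : Fin n → A) :
    guitarMap S n (applyPair ⟨i, Nat.lt_of_succ_lt h⟩ ⟨i + 1, h⟩ S.rmap a)
      = applyPair ⟨i, Nat.lt_of_succ_lt h⟩ ⟨i + 1, h⟩ venkov (guitarMap S n a) := by
  refine eq_of_prefixFold_mul_eq fun k hk => ?_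
  rw [prefixFold_guitarMap S _ hk]
  rcases eq_or_ne k (i + 1) with rfl | hki
  · have hne : (⟨i, Nat.lt_of_succ_lt h⟩ : Fin n) ≠ ⟨i + 1, h⟩ := by simp
    have hi : i ≤ n := by omega
    have hii : i ≠ i + 1 := by omega
    rw [prefixFold_succ _ _ _ hk, prefixFold_succ _ _ _ hk,
      prefixFold_applyPair _ S.circ_circ_rmap a h hi hii,
      prefixFold_applyPair _ mul_venkov _ h hi hii,
      applyPair_apply_left hne, applyPair_apply_left hne, prefixFold_guitarMap S a hi]
    simp only [SkewLeftBrace.rmap, venkov, guitarMap_apply, prefixFold_succ _ _ a hk]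
    rw [S.circ_eq_mul_lam, S.lam_circ]
  · rw [prefixFold_applyPair _ S.circ_circ_rmap a h hk hki,
      prefixFold_applyPair _ mul_venkov _ h hk hki, prefixFold_guitarMap S a hk]

end Guitar

/-- The guitar map `T_n` of a skew left brace is invertible with the indicated inverse, and
intertwines the solution `r_A` with the Venkov solution `s`:
`T_n ∘ r_{i,i+1} = s_{i,i+1} ∘ T_n` for all `n ≥ 2` and `1 ≤ i ≤ n - 1`
(here coordinates are indexed from `0`). -/
theorem skewLeftBrace_guitarMap {A : Type*} [Group A] (S : SkewLeftBrace A) (n : ℕ) :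
    (∀ a : Fin n → A, guitarMapInv S n (guitarMap S n a) = a) ∧
    (∀ a : Fin n → A, guitarMap S n (guitarMapInv S n a) = a) ∧
    (∀ i : ℕ, ∀ h : i + 1 < n, ∀ a : Fin n → A,
      guitarMap S n (applyPair ⟨i, Nat.lt_of_succ_lt h⟩ ⟨i + 1, h⟩ S.rmap a)
        = applyPair ⟨i, Nat.lt_of_succ_lt h⟩ ⟨i + 1, h⟩ venkov (guitarMap S n a)) :=
  ⟨guitarMapInv_guitarMap S, guitarMap_guitarMapInv S,
    fun _ h a => guitarMap_applyPair_rmap S h a⟩
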